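/- Let (pᵢ)ᵢ₌₀..₃ and (qⱼ)ⱼ₌₀..₃ be probability vectors. Define C_{E,C} = 2 + Σᵢ Aᵢ log₂ Aᵢ with A₀ = p₀q₀+p₁q₁+p₂q₂+p₃q₃, A₁ = p₀q₁+p₁q₀+p₂q₃+p₃q₂, A₂ = p₀q₂+p₂q₀+p₃q₁+p₁q₃, A₃ = p₀q₃+p₃q₀+p₁q₂+p₂q₁, and define C_{E,Q} = 2 + H(α) + A₀ log₂ A₀ + Σₖ (Aₖ⁺ log₂ Aₖ⁺ + Aₖ⁻ log₂ Aₖ⁻), where A₁⁺ = p₀q₁+p₁q₀, A₂⁺ = p₀q₂+p₂q₀, A₃⁺ = p₀q₃+p₃q₀, A₁⁻ = p₂q₃+p₃q₂, A₂⁻ = p₃q₁+p₁q₃, A₃⁻ = p₁q₂+p₂q₁, α = A₀+A₁⁺+A₂⁺+A₃⁺, and H is the binary entropy. Then C_{E,Q} ≥ C_{E,C}. -/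

import Mathlib

noncomputable def H (x : ℝ) : ℝ := -(x * Real.logb 2 x) - (1 - x) * Real.logb 2 (1 - x)

lemma term_lem (a M s : ℝ) (ha : 0 ≤ a) (hM : 0 < M) (hs : 0 < s) :
    a * Real.log M + a - M * s ≤ a * Real.log a - a * Real.log s := by
  rcases ha.eq_or_lt with h | h
  · subst h
    simp
    positivity
  · have hpos : 0 < M * s / a := by positivity
    have hlog := Real.log_le_sub_one_of_pos hpos
    have heq : Real.log (M * s / a) = Real.log M + Real.log s - Real.log a := by
      rw [Real.log_div (by positivity) (ne_of_gt h), Real.log_mul (ne_of_gt hM) (ne_of_gt hs)]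
    rw [heq] at hlog
    have := mul_le_mul_of_nonneg_left hlog (le_of_lt h)
    have hd : a * (M * s / a) = M * s := by field_simp
    nlinarith [this]

lemma key_lem (a b s t : ℝ) (ha : 0 ≤ a) (hb : 0 ≤ b) (hs : 0 < s) (ht : 0 < t)
    (hst : s + t = 1) :
    (a + b) * Real.log (a + b) ≤ a * Real.log a + b * Real.log b - a * Real.log s - b * Real.log t := by
  rcases eq_or_lt_of_le (by linarith : (0:ℝ) ≤ a + b) with h | hM
  · have ha0 : a = 0 := by linarith
    have hb0 : b = 0 := by linarith
    simp [ha0, hb0]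
  · have h1 := term_lem a (a+b) s ha hM hs
    have h2 := term_lem b (a+b) t hb hM ht
    have h3 : (a+b)*s + (a+b)*t = a + b := by rw [← mul_add, hst, mul_one]
    nlinarith [h1, h2]

lemma main_aux (A0 B1 B2 B3 C1 C2 C3 : ℝ)
    (hA0 : 0 ≤ A0) (hB1 : 0 ≤ B1) (hB2 : 0 ≤ B2) (hB3 : 0 ≤ B3)
    (hC1 : 0 ≤ C1) (hC2 : 0 ≤ C2) (hC3 : 0 ≤ C3)
    (hsum : A0 + B1 + B2 + B3 + C1 + C2 + C3 = 1) :
    (B1 + C1) * Real.logb 2 (B1 + C1) + (B2 + C2) * Real.logb 2 (B2 + C2)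
      + (B3 + C3) * Real.logb 2 (B3 + C3)
    ≤ H (A0 + B1 + B2 + B3) + B1 * Real.logb 2 B1 + B2 * Real.logb 2 B2 + B3 * Real.logb 2 B3
      + C1 * Real.logb 2 C1 + C2 * Real.logb 2 C2 + C3 * Real.logb 2 C3 := by
  set α := A0 + B1 + B2 + B3 with hα
  rcases eq_or_lt_of_le (by positivity : (0:ℝ) ≤ α) with h0 | hαpos
  · -- α = 0
    have eA0 : A0 = 0 := by linarith
    have eB1 : B1 = 0 := by linarith
    have eB2 : B2 = 0 := by linarith
    have eB3 : B3 = 0 := by linarith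
    simp [H, ← h0, eB1, eB2, eB3]
  · rcases eq_or_lt_of_le (by linarith : α ≤ 1) with h1 | hα1
    · -- α = 1
      have eC1 : C1 = 0 := by linarith
      have eC2 : C2 = 0 := by linarith
      have eC3 : C3 = 0 := by linarith
      simp [H, h1, eC1, eC2, eC3]
    · have ht : 0 < 1 - α := by linarith
      have k1 := key_lem B1 C1 α (1 - α) hB1 hC1 hαpos ht (by ring)
      have k2 := key_lem B2 C2 α (1 - α) hB2 hC2 hαpos ht (by ring)
      have k3 := key_lem B3 C3 α (1 - α) hB3 hC3 hαpos ht (by ring)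
      have hA0log : A0 * Real.log α ≤ 0 :=
        mul_nonpos_of_nonneg_of_nonpos hA0 (Real.log_nonpos (le_of_lt hαpos) (le_of_lt hα1))
      have hL : (0:ℝ) < Real.log 2 := Real.log_pos (by norm_num)
      have hC : C1 + C2 + C3 = 1 - α := by rw [hα]; linarith
      have Klog : (B1 + C1) * Real.log (B1 + C1) + (B2 + C2) * Real.log (B2 + C2)
          + (B3 + C3) * Real.log (B3 + C3)
          ≤ (-(α * Real.log α) - (1 - α) * Real.log (1 - α))
            + B1 * Real.log B1 + B2 * Real.log B2 + B3 * Real.log B3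
            + C1 * Real.log C1 + C2 * Real.log C2 + C3 * Real.log C3 := by
        have hCsplit : C1 * Real.log (1-α) + C2 * Real.log (1-α) + C3 * Real.log (1-α)
            = (1 - α) * Real.log (1 - α) := by rw [← hC]; ring
        have hBsplit : B1 * Real.log α + B2 * Real.log α + B3 * Real.log α
            = α * Real.log α - A0 * Real.log α := by rw [hα]; ring
        linarith [k1, k2, k3]
      simp only [H, Real.logb]
      have := (div_le_div_iff_of_pos_right hL).mpr Klog
      convert this using 1
      · rfl
      · ring
      · ring

theorem stmt_5 (p0 p1 p2 p3 q0 q1 q2 q3 : ℝ)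
    (hp0 : 0 ≤ p0) (hp1 : 0 ≤ p1) (hp2 : 0 ≤ p2) (hp3 : 0 ≤ p3)
    (hq0 : 0 ≤ q0) (hq1 : 0 ≤ q1) (hq2 : 0 ≤ q2) (hq3 : 0 ≤ q3)
    (hps : p0 + p1 + p2 + p3 = 1) (hqs : q0 + q1 + q2 + q3 = 1) :
    2 + (p0*q0 + p1*q1 + p2*q2 + p3*q3) * Real.logb 2 (p0*q0 + p1*q1 + p2*q2 + p3*q3)
      + (p0*q1 + p1*q0 + p2*q3 + p3*q2) * Real.logb 2 (p0*q1 + p1*q0 + p2*q3 + p3*q2)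
      + (p0*q2 + p2*q0 + p3*q1 + p1*q3) * Real.logb 2 (p0*q2 + p2*q0 + p3*q1 + p1*q3)
      + (p0*q3 + p3*q0 + p1*q2 + p2*q1) * Real.logb 2 (p0*q3 + p3*q0 + p1*q2 + p2*q1)
    ≤ 2 + H ((p0*q0 + p1*q1 + p2*q2 + p3*q3) + (p0*q1 + p1*q0) + (p0*q2 + p2*q0) + (p0*q3 + p3*q0))
      + (p0*q0 + p1*q1 + p2*q2 + p3*q3) * Real.logb 2 (p0*q0 + p1*q1 + p2*q2 + p3*q3)
      + (p0*q1 + p1*q0) * Real.logb 2 (p0*q1 + p1*q0)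
      + (p0*q2 + p2*q0) * Real.logb 2 (p0*q2 + p2*q0)
      + (p0*q3 + p3*q0) * Real.logb 2 (p0*q3 + p3*q0)
      + (p2*q3 + p3*q2) * Real.logb 2 (p2*q3 + p3*q2)
      + (p3*q1 + p1*q3) * Real.logb 2 (p3*q1 + p1*q3)
      + (p1*q2 + p2*q1) * Real.logb 2 (p1*q2 + p2*q1) := by
  have h := main_aux (p0*q0 + p1*q1 + p2*q2 + p3*q3) (p0*q1 + p1*q0) (p0*q2 + p2*q0)
    (p0*q3 + p3*q0) (p2*q3 + p3*q2) (p3*q1 + p1*q3) (p1*q2 + p2*q1)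
    (by positivity) (by positivity) (by positivity) (by positivity)
    (by positivity) (by positivity) (by positivity)
    (by linear_combination (q0 + q1 + q2 + q3) * hps + hqs)
  have e1 : p0*q1 + p1*q0 + (p2*q3 + p3*q2) = p0*q1 + p1*q0 + p2*q3 + p3*q2 := by ring
  have e2 : p0*q2 + p2*q0 + (p3*q1 + p1*q3) = p0*q2 + p2*q0 + p3*q1 + p1*q3 := by ring
  have e3 : p0*q3 + p3*q0 + (p1*q2 + p2*q1) = p0*q3 + p3*q0 + p1*q2 + p2*q1 := by ring
  rw [e1, e2, e3] at h
  linarith [h]
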